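/- Let (S,R) be a complemented semigroup presentation and for positive words w, w' let w\w' denote the unique positive word v' such that w⁻¹w' right-reverses to v'·v⁻¹ for some positive v, when it exists. If w\w' exists then w'\w exists, and w⁻¹w' reverses to (w\w')·(w'\w)⁻¹; consequently w·(w\w') and w'·(w'\w) are R-equivalent. -/
import Mathlib


/-- A congruence on the free monoid of words over `S`: an equivalence relation
compatible with concatenation. -/
def IsCong {S : Type} (r : List S → List S → Prop) : Prop :=
  Equivalence r ∧ ∀ a b c d : List S, r a b → r c d → r (a ++ c) (b ++ d)

/-- `R`-equivalence: the smallest congruence on the free monoid `S*`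
containing the relations `R`. -/
def REquiv {S : Type} (R : List S → List S → Prop) (w w' : List S) : Prop :=
  ∀ r : List S → List S → Prop, IsCong r → (∀ a b, R a b → r a b) → r w w'

/-- The positive word `w` viewed as a signed word. -/
def wpos {S : Type} (w : List S) : List (S ⊕ S) := w.map Sum.inl

/-- The formal inverse `w⁻¹` of a positive word `w`, as a signed word. -/
def wneg {S : Type} (w : List S) : List (S ⊕ S) := (w.map Sum.inr).reverse

/-- One step of right-reversing with respect to `R`: replace a subword `s⁻¹t`
by `v'·v⁻¹` where `s·v' = t·v` is a relation of `R` (in either orientation),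
including the trivial step `s⁻¹s ↷ ε`. -/
def RevStep {S : Type} (R : List S → List S → Prop) (x y : List (S ⊕ S)) : Prop :=
  ∃ (u u' : List (S ⊕ S)) (s t : S) (v v' : List S),
    x = u ++ [Sum.inr s, Sum.inl t] ++ u' ∧
    y = u ++ wpos v' ++ wneg v ++ u' ∧
    (R (s :: v') (t :: v) ∨ R (t :: v) (s :: v') ∨ (s = t ∧ v = [] ∧ v' = []))

/-- Right-reversing: finitely many reversing steps. -/
def Rev {S : Type} (R : List S → List S → Prop) :
    List (S ⊕ S) → List (S ⊕ S) → Prop :=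
  Relation.ReflTransGen (RevStep R)

/-- Completeness of a presentation with respect to right-reversing. -/
def Complete {S : Type} (R : List S → List S → Prop) : Prop :=
  ∀ w w' : List S, REquiv R w w' → Rev R (wneg w ++ wpos w') []


/-- A presentation is (right)-complemented if there is no relation of the form
`s… = s…` and, for distinct generators, at most one relation `s… = t…`. -/
def Complemented {S : Type} (R : List S → List S → Prop) : Prop :=
  (∀ (s : S) (v v' : List S), ¬ R (s :: v) (s :: v')) ∧
  (∀ (s t : S), s ≠ t → ∀ v v' w w' : List S,
    (R (s :: v') (t :: v) ∨ R (t :: v) (s :: v')) →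
    (R (s :: w') (t :: w) ∨ R (t :: w) (s :: w')) → v' = w' ∧ v = w)

section Aux

variable {S : Type} (R : List S → List S → Prop)

theorem requiv_isCong : IsCong (REquiv R) := by
  constructor
  · constructor
    · intro x r hr _; exact hr.1.refl x
    · intro x y h r hr hR; exact hr.1.symm (h r hr hR)
    · intro x y z h1 h2 r hr hR; exact hr.1.trans (h1 r hr hR) (h2 r hr hR)
  · intro a b c d h1 h2 r hr hR; exact hr.2 a b c d (h1 r hr hR) (h2 r hr hR)

theorem requiv_refl (a : List S) : REquiv R a a := (requiv_isCong R).1.refl a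

theorem requiv_symm {a b : List S} (h : REquiv R a b) : REquiv R b a :=
  (requiv_isCong R).1.symm h

theorem requiv_trans {a b c : List S} (h1 : REquiv R a b) (h2 : REquiv R b c) :
    REquiv R a c := (requiv_isCong R).1.trans h1 h2

theorem requiv_append {a b c d : List S} (h1 : REquiv R a b) (h2 : REquiv R c d) :
    REquiv R (a ++ c) (b ++ d) := (requiv_isCong R).2 a b c d h1 h2

theorem requiv_of_R {a b : List S} (h : R a b) : REquiv R a b :=
  fun _ _ hR => hR _ _ h

/-- `Conn R x p q` means: the signed word `x` represents `p⁻¹q`, witnessed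
by monoid-level (`REquiv`) equalities only. -/
def Conn : List (S ⊕ S) → List S → List S → Prop
  | [], p, q => REquiv R p q
  | (Sum.inl s :: x), p, q => Conn x (p ++ [s]) q
  | (Sum.inr s :: x), p, q => ∃ p₂, REquiv R p (p₂ ++ [s]) ∧ Conn x p₂ q

theorem conn_mono : ∀ (x : List (S ⊕ S)) {p p' q : List S},
    REquiv R p p' → Conn R x p' q → Conn R x p q := by
  intro x
  induction x with
  | nil => intro p p' q h h'; exact requiv_trans R h h'
  | cons a x ih =>
    intro p p' q h h'
    cases a with
    | inl s => exact ih (requiv_append R h (requiv_refl R [s])) h'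
    | inr s =>
      obtain ⟨p₂, hp₂, hc⟩ := h'
      exact ⟨p₂, requiv_trans R h hp₂, hc⟩

theorem conn_pos_iff : ∀ (a : List S) (x : List (S ⊕ S)) (p q : List S),
    Conn R (wpos a ++ x) p q ↔ Conn R x (p ++ a) q := by
  intro a
  induction a with
  | nil => intro x p q; simp [wpos]
  | cons s a ih =>
    intro x p q
    have h1 : wpos (s :: a) ++ x = Sum.inl s :: (wpos a ++ x) := by simp [wpos]
    have h2 : p ++ s :: a = (p ++ [s]) ++ a := by simp
    rw [h1, h2]
    exact ih x (p ++ [s]) q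

theorem wneg_cons (s : S) (a : List S) : wneg (s :: a) = wneg a ++ [Sum.inr s] := by
  simp [wneg]

theorem conn_neg_intro : ∀ (a : List S) (x : List (S ⊕ S)) (p r q : List S),
    REquiv R p (r ++ a) → Conn R x r q → Conn R (wneg a ++ x) p q := by
  intro a
  induction a with
  | nil =>
    intro x p r q h hc
    simpa [wneg] using conn_mono R x (by simpa using h) hc
  | cons s a ih =>
    intro x p r q h hc
    rw [wneg_cons, List.append_assoc]
    refine ih (Sum.inr s :: x) p (r ++ [s]) q ?_ ⟨r, requiv_refl R _, hc⟩
    simpa using h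

theorem conn_neg_elim : ∀ (a : List S) (x : List (S ⊕ S)) (p q : List S),
    Conn R (wneg a ++ x) p q → ∃ r, REquiv R p (r ++ a) ∧ Conn R x r q := by
  intro a
  induction a with
  | nil =>
    intro x p q h
    exact ⟨p, by simpa using requiv_refl R p, by simpa [wneg] using h⟩
  | cons s a ih =>
    intro x p q h
    rw [wneg_cons, List.append_assoc] at h
    obtain ⟨r₁, hr₁, hc⟩ := ih (Sum.inr s :: x) p q h
    obtain ⟨r, hr, hc'⟩ := hc
    refine ⟨r, ?_, hc'⟩
    have : REquiv R (r₁ ++ a) ((r ++ [s]) ++ a) := requiv_append R hr (requiv_refl R a)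
    have := requiv_trans R hr₁ this
    simpa using this

theorem conn_prefix {z z' : List (S ⊕ S)} {q : List S}
    (hl : ∀ p, Conn R z p q → Conn R z' p q) :
    ∀ (u : List (S ⊕ S)) (p : List S), Conn R (u ++ z) p q → Conn R (u ++ z') p q := by
  intro u
  induction u with
  | nil => exact hl
  | cons a u ih =>
    intro p h
    cases a with
    | inl s => exact ih (p ++ [s]) h
    | inr s =>
      obtain ⟨p₂, hp₂, hc⟩ := h
      exact ⟨p₂, hp₂, ih p₂ hc⟩

theorem conn_of_revStep {x y : List (S ⊕ S)} (hxy : RevStep R x y) :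
    ∀ p q, Conn R x p q → Conn R y p q := by
  obtain ⟨u, u', s, t, v, v', hx, hy, hrel⟩ := hxy
  intro p q h
  have hrel' : REquiv R (s :: v') (t :: v) := by
    rcases hrel with h1 | h1 | ⟨h1, h2, h3⟩
    · exact requiv_of_R R h1
    · exact requiv_symm R (requiv_of_R R h1)
    · subst h1; subst h2; subst h3; exact requiv_refl R _
  subst hx hy
  rw [List.append_assoc, List.append_assoc] at *
  refine conn_prefix R (z := [Sum.inr s, Sum.inl t] ++ u')
    (z' := wpos v' ++ (wneg v ++ u')) ?_ u p h
  intro p₀ h₀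
  obtain ⟨p₂, hp₂, hc⟩ := h₀
  rw [conn_pos_iff]
  refine conn_neg_intro R v u' (p₀ ++ v') (p₂ ++ [t]) q ?_ hc
  have e1 : REquiv R (p₀ ++ v') ((p₂ ++ [s]) ++ v') :=
    requiv_append R hp₂ (requiv_refl R v')
  have e2 : REquiv R (p₂ ++ (s :: v')) (p₂ ++ (t :: v)) :=
    requiv_append R (requiv_refl R p₂) hrel'
  have e3 : REquiv R (p₀ ++ v') (p₂ ++ (t :: v)) := by
    refine requiv_trans R e1 ?_
    simpa using e2
  simpa using e3

theorem conn_of_rev {x y : List (S ⊕ S)} (hxy : Rev R x y) :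
    ∀ p q, Conn R x p q → Conn R y p q := by
  induction hxy with
  | refl => exact fun _ _ h => h
  | tail _ hstep ih => exact fun p q h => conn_of_revStep R hstep p q (ih p q h)

/-- The flip involution on signed words. -/
def sflip (x : List (S ⊕ S)) : List (S ⊕ S) := (x.map Sum.swap).reverse

theorem sflip_append (a b : List (S ⊕ S)) :
    sflip (a ++ b) = sflip b ++ sflip a := by simp [sflip]

theorem sflip_wpos (a : List S) : sflip (wpos a) = wneg a := by
  simp [sflip, wpos, wneg, Function.comp]

theorem sflip_wneg (a : List S) : sflip (wneg a) = wpos a := by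
  simp [sflip, wpos, wneg, Function.comp]

theorem revStep_sflip {x y : List (S ⊕ S)} (h : RevStep R x y) :
    RevStep R (sflip x) (sflip y) := by
  obtain ⟨u, u', s, t, v, v', hx, hy, hrel⟩ := h
  refine ⟨sflip u', sflip u, t, s, v', v, ?_, ?_, ?_⟩
  · subst hx
    simp [sflip, List.append_assoc]
  · subst hy
    simp [sflip_append, sflip_wpos, sflip_wneg]
  · rcases hrel with h1 | h1 | ⟨h1, h2, h3⟩
    · exact Or.inr (Or.inl h1)
    · exact Or.inl h1
    · exact Or.inr (Or.inr ⟨h1.symm, h3, h2⟩)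

theorem rev_sflip {x y : List (S ⊕ S)} (h : Rev R x y) :
    Rev R (sflip x) (sflip y) := by
  induction h with
  | refl => exact Relation.ReflTransGen.refl
  | tail _ hstep ih => exact Relation.ReflTransGen.tail ih (revStep_sflip R hstep)

end Aux

/-- For a complemented presentation, if the complement `w\w'` exists, i.e.
`w⁻¹w'` reverses to `v'·v⁻¹`, then the complement `w'\w` exists and equals `v`
(`w'⁻¹w` reverses to `v·v'⁻¹`); consequently `w·(w\w')` and `w'·(w'\w)` are
`R`-equivalent. -/
theorem stmt14 {S : Type} (R : List S → List S → Prop)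
    (hcompl : Complemented R) (w w' v v' : List S)
    (h : Rev R (wneg w ++ wpos w') (wpos v' ++ wneg v)) :
    Rev R (wneg w' ++ wpos w) (wpos v ++ wneg v') ∧
    REquiv R (w ++ v') (w' ++ v) := by
  constructor
  · have := rev_sflip R h
    rwa [sflip_append, sflip_append, sflip_wpos, sflip_wneg, sflip_wpos, sflip_wneg]
      at this
  · have h0 : Conn R (wneg w ++ wpos w') w w' := by
      refine conn_neg_intro R w (wpos w') w [] w' (by simpa using requiv_refl R w) ?_
      have : Conn R (wpos w' ++ []) [] w' := by
        rw [conn_pos_iff]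
        simpa [Conn] using requiv_refl R w'
      simpa using this
    have h1 : Conn R (wpos v' ++ wneg v) w w' := conn_of_rev R h w w' h0
    rw [conn_pos_iff] at h1
    have h2 : Conn R (wneg v ++ []) (w ++ v') w' := by simpa using h1
    obtain ⟨r, hr, hc⟩ := conn_neg_elim R v [] (w ++ v') w' h2
    have hrw' : REquiv R r w' := by simpa [Conn] using hc
    exact requiv_trans R hr (requiv_append R hrw' (requiv_refl R v))
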